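/- arXiv:1009.4943 — 2 statements merged into one kernel-verified Lean document; each statement's English description precedes it below -/
import Mathlib

section
/- In a finite R-trivial monoid, (x^ω y^ω)^ω = (x^ω y^ω)^ω · (xy)^ω for all x, y. -/
/-!
In an R-trivial monoid, `p * q * r = p` forces `p * q = p`, since `p` and `p * q` then generate
the same right ideal. In particular an idempotent power `z ^ n` absorbs `z` on the right. For
`g = (e * f) ^ c` with `e = x ^ a`, `f = y ^ b` this gives `g * e * f = g`, hence `g * e = g` and
`g * f = g`; as `e` absorbs `x` and `f` absorbs `y`, `g` absorbs `x`, `y`, and so every power of `x * y`.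
-/

def IsRTrivial (M : Type*) [Monoid M] : Prop :=
  ∀ p q : M, (∃ u, p * u = q) → (∃ v, q * v = p) → p = q

theorem IsRTrivial.of_range_mul_left_injective {M : Type*} [Monoid M]
    (h : ∀ p q : M, Set.range (p * ·) = Set.range (q * ·) → p = q) : IsRTrivial M := by
  rintro p q ⟨u, rfl⟩ ⟨v, hv⟩
  refine h _ _ (Set.Subset.antisymm ?_ ?_)
  · rintro _ ⟨s, rfl⟩
    exact ⟨v * s, show p * u * (v * s) = p * s by rw [← mul_assoc, hv]⟩
  · rintro _ ⟨s, rfl⟩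
    exact ⟨u * s, show p * (u * s) = p * u * s by rw [mul_assoc]⟩

namespace IsRTrivial

variable {M : Type*} [Monoid M]

theorem mul_eq_self_of_mul_mul_eq_self (hM : IsRTrivial M) {p q r : M} (h : p * q * r = p) :
    p * q = p :=
  (hM p (p * q) ⟨q, rfl⟩ ⟨r, h⟩).symm

theorem pow_mul_self_of_isIdempotentElem (hM : IsRTrivial M) {z : M} {n : ℕ} (hn : 0 < n)
    (hz : IsIdempotentElem (z ^ n)) : z ^ n * z = z ^ n := by
  refine hM.mul_eq_self_of_mul_mul_eq_self (r := z ^ (n - 1)) ?_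
  rw [← pow_succ, ← pow_add, show n + 1 + (n - 1) = n + n by omega, pow_add, hz.eq]

end IsRTrivial

theorem mul_pow_eq_self_of_mul_eq_self {M : Type*} [Monoid M] {g w : M} (h : g * w = g) (k : ℕ) :
    g * w ^ k = g := by
  induction k with
  | zero => rw [pow_zero, mul_one]
  | succ k ih => rw [pow_succ, ← mul_assoc, ih, h]

theorem pow_idem_prod_mul_pow_general (M : Type*) [Monoid M]
    (hR : ∀ a b : M, {z : M | ∃ s : M, a * s = z} = {z : M | ∃ s : M, b * s = z} → a = b)
    (x y : M) (a b c d : ℕ) (ha : 0 < a) (hb : 0 < b) (hc : 0 < c)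
    (hxa : x ^ a * x ^ a = x ^ a)
    (hyb : y ^ b * y ^ b = y ^ b)
    (habc : (x ^ a * y ^ b) ^ c * (x ^ a * y ^ b) ^ c = (x ^ a * y ^ b) ^ c) :
    (x ^ a * y ^ b) ^ c = (x ^ a * y ^ b) ^ c * (x * y) ^ d := by
  have hM : IsRTrivial M := .of_range_mul_left_injective hR
  set e := x ^ a
  set f := y ^ b
  set g := (e * f) ^ c
  have hex : e * x = e := hM.pow_mul_self_of_isIdempotentElem ha hxa
  have hfy : f * y = f := hM.pow_mul_self_of_isIdempotentElem hb hyb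
  have hgef : g * e * f = g := by
    rw [mul_assoc]
    exact hM.pow_mul_self_of_isIdempotentElem hc habc
  have hge : g * e = g := hM.mul_eq_self_of_mul_mul_eq_self hgef
  have hgf : g * f = g := by simpa only [hge] using hgef
  have hgx : g * x = g := by rw [← hge, mul_assoc, hex]
  have hgy : g * y = g := by rw [← hgf, mul_assoc, hfy]
  have hgxy : g * (x * y) = g := by rw [← mul_assoc, hgx, hgy]
  exact (mul_pow_eq_self_of_mul_eq_self hgxy d).symm

/-- In a finite R-trivial monoid, `(x^ω y^ω)^ω = (x^ω y^ω)^ω * (xy)^ω`. -/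
theorem pow_idem_prod_mul_pow (M : Type*) [Monoid M] [Finite M]
    (hR : ∀ a b : M, {z : M | ∃ s : M, a * s = z} = {z : M | ∃ s : M, b * s = z} → a = b)
    (x y : M) (a b c d : ℕ) (ha : 0 < a) (hb : 0 < b) (hc : 0 < c) (hd : 0 < d)
    (hxa : x ^ a * x ^ a = x ^ a)
    (hyb : y ^ b * y ^ b = y ^ b)
    (habc : (x ^ a * y ^ b) ^ c * (x ^ a * y ^ b) ^ c = (x ^ a * y ^ b) ^ c)
    (hxyd : (x * y) ^ d * (x * y) ^ d = (x * y) ^ d) :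
    (x ^ a * y ^ b) ^ c = (x ^ a * y ^ b) ^ c * (x * y) ^ d :=
  pow_idem_prod_mul_pow_general M hR x y a b c d ha hb hc hxa hyb habc
end

section
/- Let S be a finite R-trivial monoid, u, v ∈ S, and let e be a maximal element of {s ∈ S : us = u} with respect to the preorder ≤. If {a : ae = a} ⊆ {a : av = a}, then uv = u. -/
/-!
In a finite monoid some positive power `e ^ n` is idempotent, it still stabilises `u`
and lies above `e`, so maximality forces `e = e ^ n`. Hence `e` itself satisfies `e * e = e`,
the hypothesis gives `e * v = e`, and `u * v = u * e * v = u * e = u`.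
-/

section FiniteMonoid

variable {M : Type*} [Monoid M]

theorem pow_add_mul_eq_of_pow_add_eq {a : M} {i p c : ℕ} (h : a ^ (i + p) = a ^ i)
    (hc : i ≤ c) (k : ℕ) : a ^ (c + p * k) = a ^ c := by
  obtain ⟨d, rfl⟩ := Nat.exists_eq_add_of_le hc
  induction k with
  | zero => simp
  | succ k ih =>
    calc a ^ (i + d + p * (k + 1)) = a ^ (i + d + p * k) * a ^ p := by
          rw [← pow_add]; ring_nf
      _ = a ^ d * a ^ (i + p) := by rw [ih, ← pow_add, ← pow_add]; ring_nf
      _ = a ^ (i + d) := by rw [h, ← pow_add, add_comm d]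

theorem exists_isIdempotentElem_pow [Finite M] (a : M) :
    ∃ n, 0 < n ∧ IsIdempotentElem (a ^ n) := by
  obtain ⟨i, j, hij, hpow⟩ := Set.finite_univ.exists_lt_map_eq_of_forall_mem
    (f := fun n : ℕ ↦ a ^ n) fun _ ↦ Set.mem_univ _
  have hperiod : a ^ (i + (j - i)) = a ^ i := by rw [Nat.add_sub_cancel' hij.le]; exact hpow.symm
  have hp : 1 ≤ j - i := Nat.sub_pos_of_lt hij
  refine ⟨(j - i) * (i + 1), by positivity, ?_⟩
  rw [IsIdempotentElem, ← pow_add]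
  exact pow_add_mul_eq_of_pow_add_eq hperiod (by nlinarith) _

theorem mul_pow_eq_self_of_mul_eq_self_s16 {u e : M} (he : u * e = u) (n : ℕ) : u * e ^ n = u := by
  induction n with
  | zero => simp
  | succ n ih => rw [pow_succ, ← mul_assoc, ih, he]

theorem isIdempotentElem_of_maximal_mul_eq_self [Finite M] {u e : M} (he : u * e = u)
    (hemax : ∀ s : M, u * s = u → (∃ w : M, e * w = s) → e = s) : IsIdempotentElem e := by
  obtain ⟨n, hn, hidem⟩ := exists_isIdempotentElem_pow e
  have hle : ∃ w, e * w = e ^ n := ⟨e ^ (n - 1), by rw [← pow_succ', Nat.sub_add_cancel hn]⟩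
  rwa [← hemax _ (mul_pow_eq_self_of_mul_eq_self_s16 he n) hle] at hidem

end FiniteMonoid

theorem descent_condition_general (M : Type*) [Monoid M] [Finite M]
    (u v e : M)
    (he : u * e = u) (hemax : ∀ s : M, u * s = u → (∃ w : M, e * w = s) → e = s)
    (h : {a : M | a * e = a} ⊆ {a : M | a * v = a}) :
    u * v = u := by
  have hev : e * v = e := h (isIdempotentElem_of_maximal_mul_eq_self he hemax)
  calc u * v = u * (e * v) := by rw [← mul_assoc, he]
    _ = u * e := by rw [hev]
    _ = u := he

/-- In a finite R-trivial monoid, if `e` is a maximal element of `{s : us = u}`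
and `{a : ae = a} ⊆ {a : av = a}`, then `uv = u`. -/
theorem descent_condition (M : Type*) [Monoid M] [Finite M]
    (hR : ∀ a b : M, {z : M | ∃ s : M, a * s = z} = {z : M | ∃ s : M, b * s = z} → a = b)
    (u v e : M)
    (he : u * e = u) (hemax : ∀ s : M, u * s = u → (∃ w : M, e * w = s) → e = s)
    (h : {a : M | a * e = a} ⊆ {a : M | a * v = a}) :
    u * v = u :=
  descent_condition_general M u v e he hemax h
end
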